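/- arXiv:1312.7561 — 7 statements merged into one kernel-verified Lean document; each statement's English description precedes it below -/
import Mathlib

section
/- Let N ≥ 1, let n₁,…,n_N be positive integers, and let R be a nonzero complex number. Consider the complex algebra A = ⊕_{i=1}^N M_{n_i}(ℂ) with Frobenius form ε(a) = R·Σ_{i=1}^N n_i·Tr(a_i) for a = ⊕_i a_i, and define z ∈ A componentwise by z_i = (R·n_i)⁻² · Σ_{l,m,r,s=1}^{n_i} e_{lm}·e_{rs}·e_{ml}·e_{sr} (elementary matrices in the i-th block). Then for every natural number g, R·ε(z^g) = R^{2−2g}·Σ_{i=1}^N n_i^{2−2g} (powers with the integer exponent 2−2g, which is legitimate since R ≠ 0 and n_i ≥ 1). -/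
open Matrix

/-! The handle element is a scalar in every block: `e_lm e_rs e_ml e_sr` vanishes unless
`r = s = m`, when it is `e_ll e_mm`, so the `i`-th block of `z` is `(R nᵢ)⁻²` times the
identity. Hence `Tr (zᵢ ^ g) = (R nᵢ)^(-2g) nᵢ`, and the factors `R` and `nᵢ` in front of the
trace complete each summand to `(R nᵢ)^(2-2g)`. -/

theorem Matrix.sum_single_self_one {ι α : Type*} [Fintype ι] [DecidableEq ι] [Semiring α] :
    ∑ i : ι, single i i (1 : α) = 1 := by
  simpa [one_apply, apply_ite] using (matrix_eq_sum_single (1 : Matrix ι ι α)).symm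

theorem Matrix.sum_single_mul_single_mul_single_mul_single {ι α : Type*} [Fintype ι]
    [DecidableEq ι] [Semiring α] :
    ∑ l : ι, ∑ m : ι, ∑ r : ι, ∑ s : ι,
      single l m (1 : α) * single r s 1 * single m l 1 * single s r 1 = 1 := by
  calc _ = ∑ l : ι, ∑ m : ι, single l l (1 : α) * single m m 1 := by
        simp [single_mul_mul_single, single_apply, ite_and, apply_ite (single _ _), ite_mul]
    _ = 1 := by rw [← Finset.sum_mul_sum, sum_single_self_one, one_mul]

theorem sq_mul_zpow_neg_two_pow {K : Type*} [DivisionRing K] {a : K} (ha : a ≠ 0) (g : ℕ) :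
    a ^ 2 * (a ^ (-2 : ℤ)) ^ g = a ^ ((2 : ℤ) - 2 * (g : ℤ)) := by
  rw [← zpow_natCast (a ^ (-2 : ℤ)), ← _root_.zpow_mul, ← zpow_natCast a 2, ← zpow_add₀ ha]
  ring_nf

theorem fhk_partition_function_complex_general
    (N : ℕ) (n : Fin N → ℕ) (hn : ∀ i, 0 < n i)
    (R : ℂ) (hR : R ≠ 0)
    (z : ∀ i : Fin N, Matrix (Fin (n i)) (Fin (n i)) ℂ)
    (hz : ∀ i, z i = ((R * (n i : ℂ)) ^ (-2 : ℤ)) •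
        ∑ l : Fin (n i), ∑ m : Fin (n i), ∑ r : Fin (n i), ∑ s : Fin (n i),
          Matrix.single l m (1 : ℂ) * Matrix.single r s 1 *
            Matrix.single m l 1 * Matrix.single s r 1)
    (g : ℕ) :
    R * (R * ∑ i : Fin N, (n i : ℂ) * ((z ^ g) i).trace)
      = R ^ ((2 : ℤ) - 2 * (g : ℤ)) * ∑ i : Fin N, (n i : ℂ) ^ ((2 : ℤ) - 2 * (g : ℤ)) := by
  have hz_scalar : ∀ i, z i = ((R * (n i : ℂ)) ^ (-2 : ℤ)) • (1 : Matrix _ _ ℂ) := fun i => by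
    rw [hz i, sum_single_mul_single_mul_single_mul_single]
  have hsummand : ∀ i, R * (R * ((n i : ℂ) * ((z ^ g) i).trace))
      = R ^ ((2 : ℤ) - 2 * (g : ℤ)) * (n i : ℂ) ^ ((2 : ℤ) - 2 * (g : ℤ)) := fun i => by
    have hRn : R * (n i : ℂ) ≠ 0 := mul_ne_zero hR (Nat.cast_ne_zero.mpr (hn i).ne')
    rw [Pi.pow_apply, hz_scalar, smul_pow, one_pow, trace_smul, trace_one, Fintype.card_fin,
      smul_eq_mul, ← mul_zpow, ← sq_mul_zpow_neg_two_pow hRn]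
    ring
  simp only [Finset.mul_sum, hsummand]

/-- For the FHK state sum model on `A = ⊕ᵢ M_{nᵢ}(ℂ)` with Frobenius form
`ε(a) = R ∑ᵢ nᵢ Tr(aᵢ)` and handle element `z` with
`zᵢ = (Rnᵢ)⁻² ∑_{l,m,r,s} e_{lm} e_{rs} e_{ml} e_{sr}`,
the partition function satisfies `R ε(z^g) = R^{2-2g} ∑ᵢ nᵢ^{2-2g}`. -/
theorem fhk_partition_function_complex
    (N : ℕ) (hN : 1 ≤ N) (n : Fin N → ℕ) (hn : ∀ i, 0 < n i)
    (R : ℂ) (hR : R ≠ 0)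
    (z : ∀ i : Fin N, Matrix (Fin (n i)) (Fin (n i)) ℂ)
    (hz : ∀ i, z i = ((R * (n i : ℂ)) ^ (-2 : ℤ)) •
        ∑ l : Fin (n i), ∑ m : Fin (n i), ∑ r : Fin (n i), ∑ s : Fin (n i),
          Matrix.single l m (1 : ℂ) * Matrix.single r s 1 *
            Matrix.single m l 1 * Matrix.single s r 1)
    (g : ℕ) :
    R * (R * ∑ i : Fin N, (n i : ℂ) * ((z ^ g) i).trace)
      = R ^ ((2 : ℤ) - 2 * (g : ℤ)) * ∑ i : Fin N, (n i : ℂ) ^ ((2 : ℤ) - 2 * (g : ℤ)) :=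
  fhk_partition_function_complex_general N n hn R hR z hz g
end

section
/- Let n ≥ 1 and let R be a nonzero real number. Regard A = Mₙ(ℍ) as an algebra over ℝ with Frobenius form ε(a) = 4Rn·re(Tr(a)), and define z = (4Rn)⁻² · Σ_{w,t ∈ {1,î,ĵ,k̂}} Σ_{l,m,r,s=1}^{n} (w·e_{lm})·(t·e_{rs})·(w̄·e_{ml})·(t̄·e_{sr}). Then z = (4R²n²)⁻¹·1, and for every natural number g, R·ε(z^g) = 2^{2−2g}·R^{2−2g}·n^{2−2g}. -/
/-!
In the handle element only the terms with `l = m = r = s` survive, so `z` is the scalar matrix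
`(4Rn)⁻² ∑_{w,t} w t w̄ t̄`. Conjugation averaged over the basis `1, î, ĵ, k̂` projects onto the
real part, `∑_w w x w̄ = 4 re x`, so the quaternion sum is `4`. Hence `z = (2Rn)⁻²`, and
`R ε(z^g) = (2Rn)² (2Rn)^{-2g}`.
-/

open Quaternion Matrix

namespace Matrix
variable {n α : Type*} [Fintype n] [DecidableEq n] [Semiring α]

theorem single_mul_single_mul_single_mul_single (l m r s : n) (a b c d : α) :
    single l m a * single r s b * single m l c * single s r d =
      if m = r then if s = m then if l = s then single l l (a * b * c * d) else 0 else 0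
      else 0 := by
  rcases eq_or_ne m r with rfl | hmr
  · rcases eq_or_ne s m with rfl | hsm
    · rcases eq_or_ne l s with rfl | hls
      · simp [mul_assoc]
      · simp [hls]
    · simp [hsm]
  · simp [hmr]

theorem sum_single_mul_single_mul_single_mul_single_s6 (a b c d : α) :
    ∑ l : n, ∑ m : n, ∑ r : n, ∑ s : n,
      single l m a * single r s b * single m l c * single s r d = scalar n (a * b * c * d) := by
  simp only [single_mul_single_mul_single_mul_single, Finset.sum_ite_irrel,
    Finset.sum_const_zero, Finset.sum_ite_eq, Finset.sum_ite_eq', Finset.mem_univ, if_true,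
    sum_single_eq_diagonal, scalar_apply]

end Matrix

def Quaternion.unitBasis (R : Type*) [CommRing R] : Fin 4 → ℍ[R] :=
  ![1, ⟨0, 1, 0, 0⟩, ⟨0, 0, 1, 0⟩, ⟨0, 0, 0, 1⟩]

namespace Quaternion
variable {R : Type*} [CommRing R]

theorem sum_unitBasis_mul_mul_star (x : ℍ[R]) :
    ∑ w, unitBasis R w * x * star (unitBasis R w) = ((4 * x.re : R) : ℍ[R]) := by
  rw [Fin.sum_univ_four]
  ext <;> simp only [re_add, imI_add, imJ_add, imK_add, re_mul, imI_mul, imJ_mul, imK_mul,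
    re_star, imI_star, imJ_star, imK_star, re_coe, imI_coe, imJ_coe, imK_coe] <;>
    simp [unitBasis]; ring

theorem sum_unitBasis_mul_mul_star_mul_star :
    ∑ w, ∑ t, unitBasis R w * unitBasis R t * star (unitBasis R w) * star (unitBasis R t) = 4 := by
  rw [Finset.sum_comm]
  simp only [← Finset.sum_mul, sum_unitBasis_mul_mul_star]
  rw [Fin.sum_univ_four]
  simp [unitBasis]
  rfl

theorem re_trace_smul_one_pow {ι : Type*} [Fintype ι] [DecidableEq ι] (c : R) (g : ℕ) :
    ((c • (1 : Matrix ι ι ℍ[R])) ^ g).trace.re = c ^ g * Fintype.card ι := by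
  simp [smul_pow, trace_smul]

end Quaternion

/-- For the FHK state sum model on the real algebra `Mₙ(ℍ)` with Frobenius form
`ε(a) = 4Rn · re(Tr a)` and handle element
`z = (4Rn)⁻² ∑_{w,t ∈ {1,î,ĵ,k̂}} ∑_{l,m,r,s} (w e_{lm})(t e_{rs})(w̄ e_{ml})(t̄ e_{sr})`,
one has `z = (4R²n²)⁻¹ • 1` and `R ε(z^g) = 2^{2-2g} R^{2-2g} n^{2-2g}`. -/
theorem fhk_partition_function_quaternionic
    (n : ℕ) (hn : 1 ≤ n) (R : ℝ) (hR : R ≠ 0)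
    (u : Fin 4 → ℍ[ℝ])
    (hu : u = ![1, (⟨0, 1, 0, 0⟩ : ℍ[ℝ]), (⟨0, 0, 1, 0⟩ : ℍ[ℝ]), (⟨0, 0, 0, 1⟩ : ℍ[ℝ])])
    (z : Matrix (Fin n) (Fin n) ℍ[ℝ])
    (hz : z = ((4 * R * (n : ℝ)) ^ (-2 : ℤ)) •
        ∑ w : Fin 4, ∑ t : Fin 4, ∑ l : Fin n, ∑ m : Fin n, ∑ r : Fin n, ∑ s : Fin n,
          (u w • Matrix.single l m (1 : ℍ[ℝ])) * (u t • Matrix.single r s 1) *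
            (star (u w) • Matrix.single m l 1) * (star (u t) • Matrix.single s r 1)) :
    z = ((4 * R ^ 2 * (n : ℝ) ^ 2)⁻¹) • (1 : Matrix (Fin n) (Fin n) ℍ[ℝ]) ∧
      ∀ g : ℕ, R * (4 * R * (n : ℝ) * ((z ^ g).trace).re)
        = 2 ^ ((2 : ℤ) - 2 * (g : ℤ)) * R ^ ((2 : ℤ) - 2 * (g : ℤ)) *
            (n : ℝ) ^ ((2 : ℤ) - 2 * (g : ℤ)) := by
  replace hu : u = unitBasis ℝ := hu
  subst hu
  have hn0 : (n : ℝ) ≠ 0 := by positivity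
  have hz1 : z = (4 * R ^ 2 * (n : ℝ) ^ 2)⁻¹ • (1 : Matrix (Fin n) (Fin n) ℍ[ℝ]) := by
    simp only [hz, smul_single, smul_eq_mul, mul_one, sum_single_mul_single_mul_single_mul_single_s6,
      ← map_sum, sum_unitBasis_mul_mul_star_mul_star]
    rw [map_ofNat, show (4 : Matrix (Fin n) (Fin n) ℍ[ℝ]) = (4 : ℝ) • 1 by
      rw [ofNat_smul_eq_nsmul, nsmul_eq_mul, mul_one, Nat.cast_ofNat], smul_smul]
    congr 1
    rw [_root_.zpow_neg, zpow_two]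
    field_simp
  refine ⟨hz1, fun g => ?_⟩
  set x : ℝ := 2 * R * n
  have hx : x ≠ 0 := by positivity
  calc R * (4 * R * n * (z ^ g).trace.re) = x ^ 2 * (x ^ 2)⁻¹ ^ g := by
        rw [hz1, re_trace_smul_one_pow, Fintype.card_fin]; ring
    _ = x ^ ((2 : ℤ) - 2 * g) := by
        rw [zpow_sub₀ hx, div_eq_mul_inv, inv_pow, ← pow_mul]; norm_cast
    _ = _ := by simp only [x, mul_zpow]
end

section
/- Let k be a field, let A be a finite-dimensional associative unital k-algebra, and let ε : A → k be a linear functional such that the bilinear form (a,b) ↦ ε(a·b) is nondegenerate. Suppose there are finitely many pairs (y_i, z_i) of elements of A with Σ_i ε(a·y_i)·z_i = a for every a ∈ A, and a nonzero scalar R ∈ k with R·Σ_i y_i·z_i = 1. Then the element t = R·Σ_i y_i ⊗ z_i of A ⊗_k A satisfies (i) the multiplication map A ⊗_k A → A sends t to 1, and (ii) for every x ∈ A, Σ_i (x·y_i) ⊗ z_i = Σ_i y_i ⊗ (z_i·x). In other words, A is a separable algebra with separability idempotent t. -/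
/-!
Nondegeneracy of `(a, b) ↦ ε (a * b)` makes the copairing `∑ᵢ yᵢ ⊗ zᵢ` a dual basis on both
sides, so that `∑ᵢ ε (zᵢ * a) • yᵢ = a` as well. Expanding `x * yᵢ` in the second dual basis and
`zⱼ * x` in the first writes both `∑ᵢ (x * yᵢ) ⊗ zᵢ` and `∑ⱼ yⱼ ⊗ (zⱼ * x)` as
`∑ᵢ ∑ⱼ ε (zⱼ * x * yᵢ) • yⱼ ⊗ zᵢ`.
-/

open scoped TensorProduct

section FrobeniusCopairing

variable {k A ι : Type*} [CommRing k] [Ring A] [Algebra k A] (ε : A →ₗ[k] k)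
  {s : Finset ι} {y z : ι → A}

theorem frobenius_form_mul_eq_sum (hB : ∀ a : A, ∑ i ∈ s, ε (a * y i) • z i = a) (c a : A) :
    ε (c * a) = ∑ i ∈ s, ε (c * y i) * ε (z i * a) := by
  conv_lhs => rw [← hB c]
  simp only [Finset.sum_mul, map_sum, smul_mul_assoc, map_smul, smul_eq_mul]

theorem sum_frobenius_form_smul_eq_of_nondegenerate
    (hnd : ∀ b : A, (∀ a : A, ε (a * b) = 0) → b = 0)
    (hB : ∀ a : A, ∑ i ∈ s, ε (a * y i) • z i = a) (a : A) :
    ∑ i ∈ s, ε (z i * a) • y i = a := by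
  refine sub_eq_zero.mp (hnd _ fun c => ?_)
  rw [mul_sub, map_sub, Finset.mul_sum, map_sum, frobenius_form_mul_eq_sum ε hB, sub_eq_zero]
  refine Finset.sum_congr rfl fun i _ => ?_
  rw [mul_smul_comm, map_smul, smul_eq_mul, mul_comm]

theorem sum_mul_tmul_eq_sum_tmul_mul
    (hB : ∀ a : A, ∑ i ∈ s, ε (a * y i) • z i = a)
    (hB' : ∀ a : A, ∑ i ∈ s, ε (z i * a) • y i = a) (x : A) :
    ∑ i ∈ s, (x * y i) ⊗ₜ[k] z i = ∑ i ∈ s, y i ⊗ₜ[k] (z i * x) := by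
  calc ∑ i ∈ s, (x * y i) ⊗ₜ[k] z i
      = ∑ i ∈ s, ∑ j ∈ s, ε (z j * (x * y i)) • (y j ⊗ₜ[k] z i) := by
        refine Finset.sum_congr rfl fun i _ => ?_
        conv_lhs => rw [← hB' (x * y i)]
        simp only [TensorProduct.sum_tmul, TensorProduct.smul_tmul']
    _ = ∑ j ∈ s, ∑ i ∈ s, ε (z j * x * y i) • (y j ⊗ₜ[k] z i) := by
        rw [Finset.sum_comm]
        simp only [mul_assoc]
    _ = ∑ j ∈ s, y j ⊗ₜ[k] (z j * x) := by
        refine Finset.sum_congr rfl fun j _ => ?_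
        conv_rhs => rw [← hB (z j * x)]
        simp only [TensorProduct.tmul_sum, TensorProduct.tmul_smul]

end FrobeniusCopairing

theorem special_frobenius_is_separable_general
    (k : Type*) [Field k] (A : Type*) [Ring A] [Algebra k A]
    (ε : A →ₗ[k] k)
    (hnd₂ : ∀ b : A, (∀ a : A, ε (a * b) = 0) → b = 0)
    (ι : Type*) (s : Finset ι) (y z : ι → A)
    (hB : ∀ a : A, ∑ i ∈ s, ε (a * y i) • z i = a)
    (R : k) (hunit : R • ∑ i ∈ s, y i * z i = 1) :
    (LinearMap.mul' k A) (R • ∑ i ∈ s, y i ⊗ₜ[k] z i) = 1 ∧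
      ∀ x : A, (R • ∑ i ∈ s, (x * y i) ⊗ₜ[k] z i) = R • ∑ i ∈ s, y i ⊗ₜ[k] (z i * x) := by
  have hB' := sum_frobenius_form_smul_eq_of_nondegenerate ε hnd₂ hB
  refine ⟨?_, fun x => by rw [sum_mul_tmul_eq_sum_tmul_mul ε hB hB' x]⟩
  simpa only [map_smul, map_sum, LinearMap.mul'_apply] using hunit

/-- A special Frobenius algebra is separable: if `ε` is a Frobenius form on `A`, the pairs
`(yᵢ, zᵢ)` represent the inverse `B = ∑ᵢ yᵢ ⊗ zᵢ` of the bilinear form `(a,b) ↦ ε(a·b)`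
(i.e. `∑ᵢ ε(a·yᵢ)·zᵢ = a` for all `a`), and `R·∑ᵢ yᵢ·zᵢ = 1` with `R ≠ 0`, then
`t = R • ∑ᵢ yᵢ ⊗ zᵢ` satisfies `m(t) = 1` and `x ▷ t = t ◁ x` for all `x`. -/
theorem special_frobenius_is_separable
    (k : Type*) [Field k] (A : Type*) [Ring A] [Algebra k A] [FiniteDimensional k A]
    (ε : A →ₗ[k] k)
    (hnd₁ : ∀ a : A, (∀ b : A, ε (a * b) = 0) → a = 0)
    (hnd₂ : ∀ b : A, (∀ a : A, ε (a * b) = 0) → b = 0)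
    (ι : Type*) (s : Finset ι) (y z : ι → A)
    (hB : ∀ a : A, ∑ i ∈ s, ε (a * y i) • z i = a)
    (R : k) (hR : R ≠ 0) (hunit : R • ∑ i ∈ s, y i * z i = 1) :
    (LinearMap.mul' k A) (R • ∑ i ∈ s, y i ⊗ₜ[k] z i) = 1 ∧
      ∀ x : A, (R • ∑ i ∈ s, (x * y i) ⊗ₜ[k] z i) = R • ∑ i ∈ s, y i ⊗ₜ[k] (z i * x) :=
  special_frobenius_is_separable_general k A ε hnd₂ ι s y z hB R hunit
end

section
/- Let A be a finite-dimensional associative unital ℂ-algebra and ε : A → ℂ a linear functional whose associated bilinear form (a,b) ↦ ε(a·b) is nondegenerate. Suppose there are finitely many pairs (y_i, z_i) of elements of A with Σ_i ε(a·y_i)·z_i = a for every a ∈ A, and a nonzero scalar R ∈ ℂ with R·Σ_i y_i·z_i = 1. Then A is a semisimple ring. -/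
/-!
The Casimir element `B = ∑ᵢ yᵢ ⊗ zᵢ` of a Frobenius form commutes with the algebra,
`a·B = B·a`, because both sides are expansions of the same element in the dual bases.
So averaging any `K`-linear projection `p` onto an `A`-submodule as `m ↦ R·∑ᵢ yᵢ·p(zᵢ·m)`
(Maschke's trick) gives an `A`-linear map; it is still a projection onto the submodule
because `R·∑ᵢ yᵢ·zᵢ = 1`. Hence every `A`-module, in particular `A` itself, is semisimple.
-/

open Finset

namespace FrobeniusForm

variable {K A : Type*} [Field K] [Ring A] [Algebra K A] (ε : A →ₗ[K] K)
  {ι : Type*} (s : Finset ι) (y z : ι → A)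

theorem sum_map_mul_smul_eq_of_sum_map_mul_smul_eq
    (hnd : ∀ b : A, (∀ a : A, ε (a * b) = 0) → b = 0)
    (hB : ∀ a : A, ∑ i ∈ s, ε (a * y i) • z i = a) (a : A) :
    ∑ i ∈ s, ε (z i * a) • y i = a := by
  rw [← sub_eq_zero]
  refine hnd _ fun c => ?_
  have pair_eq : ε ((∑ i ∈ s, ε (c * y i) • z i) * a) = ε (c * ∑ i ∈ s, ε (z i * a) • y i) := by
    simp only [sum_mul, mul_sum, smul_mul_assoc, mul_smul_comm, map_sum, map_smul, smul_eq_mul,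
      mul_comm]
  rw [mul_sub, map_sub, ← pair_eq, hB c, sub_self]

variable {M : Type*} [AddCommGroup M] [Module A M] [Module K M] [IsScalarTower K A M]

theorem sum_smul_map_smul_smul_comm
    (hB : ∀ a : A, ∑ i ∈ s, ε (a * y i) • z i = a)
    (hB' : ∀ a : A, ∑ i ∈ s, ε (z i * a) • y i = a)
    (p : M →ₗ[K] M) (a : A) (m : M) :
    ∑ i ∈ s, y i • p (z i • a • m) = a • ∑ i ∈ s, y i • p (z i • m) :=
  calc ∑ j ∈ s, y j • p (z j • a • m)
      = ∑ j ∈ s, y j • p ((∑ i ∈ s, ε (z j * a * y i) • z i) • m) := by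
        simp only [hB, smul_smul]
    _ = ∑ i ∈ s, (∑ j ∈ s, ε (z j * (a * y i)) • y j) • p (z i • m) := by
        simp only [sum_smul, smul_sum, map_sum, smul_assoc, map_smul, mul_assoc]
        rw [sum_comm]
        simp only [smul_comm (y _)]
    _ = a • ∑ i ∈ s, y i • p (z i • m) := by
        simp only [hB', smul_sum, mul_smul]

theorem exists_isProj_of_isProj_restrictScalars
    (hB : ∀ a : A, ∑ i ∈ s, ε (a * y i) • z i = a)
    (hB' : ∀ a : A, ∑ i ∈ s, ε (z i * a) • y i = a)
    {R : K} (hunit : R • ∑ i ∈ s, y i * z i = 1)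
    {N : Submodule A M} {p : M →ₗ[K] M} (hp : LinearMap.IsProj (N.restrictScalars K) p) :
    ∃ P : M →ₗ[A] M, LinearMap.IsProj N P := by
  let P : M →ₗ[A] M :=
    { toFun := fun m => R • ∑ i ∈ s, y i • p (z i • m)
      map_add' := fun m n => by simp only [smul_add, map_add, sum_add_distrib]
      map_smul' := fun a m => by
        rw [RingHom.id_apply, sum_smul_map_smul_smul_comm ε s y z hB hB', smul_comm] }
  refine ⟨P, fun m => N.smul_of_tower_mem R (N.sum_mem fun i _ => N.smul_mem _ (hp.map_mem _)),
    fun m hm => ?_⟩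
  calc R • ∑ i ∈ s, y i • p (z i • m)
      = R • ∑ i ∈ s, (y i * z i) • m := by
        simp only [hp.map_id _ (N.smul_mem _ hm), mul_smul]
    _ = m := by rw [← sum_smul, ← smul_assoc, hunit, one_smul]

theorem isSemisimpleModule
    (hnd : ∀ b : A, (∀ a : A, ε (a * b) = 0) → b = 0)
    (hB : ∀ a : A, ∑ i ∈ s, ε (a * y i) • z i = a)
    {R : K} (hunit : R • ∑ i ∈ s, y i * z i = 1) :
    IsSemisimpleModule A M := by
  have hB' := sum_map_mul_smul_eq_of_sum_map_mul_smul_eq ε s y z hnd hB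
  refine (isSemisimpleModule_iff A M).mpr ⟨fun N => ?_⟩
  obtain ⟨N', hN'⟩ := Submodule.exists_isCompl (N.restrictScalars K)
  have hp : LinearMap.IsProj (N.restrictScalars K) ((N.restrictScalars K).projection N' hN') :=
    ⟨Submodule.projection_apply_mem hN', fun _ hm => Submodule.projection_apply_of_mem_left hN' hm⟩
  obtain ⟨P, hP⟩ := exists_isProj_of_isProj_restrictScalars ε s y z hB hB' hunit hp
  exact ⟨LinearMap.ker P, hP.isCompl⟩

end FrobeniusForm

theorem special_frobenius_complex_is_semisimple_general
    (A : Type*) [Ring A] [Algebra ℂ A]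
    (ε : A →ₗ[ℂ] ℂ)
    (hnd₂ : ∀ b : A, (∀ a : A, ε (a * b) = 0) → b = 0)
    (ι : Type*) (s : Finset ι) (y z : ι → A)
    (hB : ∀ a : A, ∑ i ∈ s, ε (a * y i) • z i = a)
    (R : ℂ) (hunit : R • ∑ i ∈ s, y i * z i = 1) :
    IsSemisimpleRing A :=
  FrobeniusForm.isSemisimpleModule ε s y z hnd₂ hB hunit

/-- A special Frobenius algebra over `ℂ` is semisimple: if `ε` is a Frobenius form on `A`,
the pairs `(yᵢ, zᵢ)` represent the inverse of the bilinear form `(a,b) ↦ ε(a·b)`, and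
`R·∑ᵢ yᵢ·zᵢ = 1` with `R ≠ 0`, then `A` is a semisimple ring. -/
theorem special_frobenius_complex_is_semisimple
    (A : Type*) [Ring A] [Algebra ℂ A] [FiniteDimensional ℂ A]
    (ε : A →ₗ[ℂ] ℂ)
    (hnd₁ : ∀ a : A, (∀ b : A, ε (a * b) = 0) → a = 0)
    (hnd₂ : ∀ b : A, (∀ a : A, ε (a * b) = 0) → b = 0)
    (ι : Type*) (s : Finset ι) (y z : ι → A)
    (hB : ∀ a : A, ∑ i ∈ s, ε (a * y i) • z i = a)
    (R : ℂ) (hR : R ≠ 0) (hunit : R • ∑ i ∈ s, y i * z i = 1) :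
    IsSemisimpleRing A :=
  special_frobenius_complex_is_semisimple_general A ε hnd₂ ι s y z hB R hunit
end

section
/- Let n ≥ 1, let R be a nonzero complex number, and let x ∈ Mₙ(ℂ) be invertible. Suppose the Frobenius form ε(a) = Tr(x·a) is symmetric, i.e. Tr(x·a·b) = Tr(x·b·a) for all a, b ∈ Mₙ(ℂ), and suppose R·Tr(x⁻¹) = 1. Then x = R·n·1, i.e. ε(a) = R·n·Tr(a) for all a. -/
/-!
Symmetry of `ε` says `Tr((x a - a x) b) = 0` for all `b`, so by nondegeneracy of the trace
pairing `x` is central, i.e. `x = c • 1`. Then `Tr(x⁻¹) = n / c`, and `R · Tr(x⁻¹) = 1`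
forces `c = R n`.
-/

open Matrix

namespace Matrix

variable {n R K : Type*} [Fintype n] [DecidableEq n]

theorem mem_range_scalar_of_trace_mul_mul_comm [CommSemiring R] {x : Matrix n n R}
    (h : ∀ a b : Matrix n n R, (x * a * b).trace = (x * b * a).trace) :
    x ∈ Set.range (scalar n) := by
  rw [← center_eq_range, Semigroup.mem_center_iff]
  refine fun a => ext_iff_trace_mul_right.mpr fun b => ?_
  rw [h, trace_mul_cycle, trace_mul_cycle]

theorem inv_scalar [Field K] (c : K) : (scalar n c)⁻¹ = scalar n c⁻¹ := by
  obtain rfl | hc := eq_or_ne c 0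
  · simp
  · exact inv_eq_left_inv (by rw [← map_mul, inv_mul_cancel₀ hc, map_one])

end Matrix

theorem symmetric_special_frobenius_form_on_matrix_algebra_general
    (n : ℕ) (R : ℂ)
    (x : Matrix (Fin n) (Fin n) ℂ)
    (hsymm : ∀ a b : Matrix (Fin n) (Fin n) ℂ, (x * a * b).trace = (x * b * a).trace)
    (hspec : R * (x⁻¹).trace = 1) :
    x = (R * (n : ℂ)) • (1 : Matrix (Fin n) (Fin n) ℂ) := by
  obtain ⟨c, rfl⟩ := mem_range_scalar_of_trace_mul_mul_comm hsymm
  rw [inv_scalar, scalar_apply, trace_diagonal, Finset.sum_const, Finset.card_univ,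
    Fintype.card_fin, nsmul_eq_mul] at hspec
  have hc : c ≠ 0 := by
    rintro rfl
    simp at hspec
  have hc_eq : c = R * n := by
    field_simp at hspec
    exact hspec.symm
  rw [hc_eq, smul_one_eq_diagonal, scalar_apply]

/-- If the Frobenius form `ε(a) = Tr(x·a)` on `Mₙ(ℂ)` is symmetric and satisfies the special
condition `R·Tr(x⁻¹) = 1`, then `x = Rn·1`, i.e. `ε(a) = Rn·Tr(a)`. -/
theorem symmetric_special_frobenius_form_on_matrix_algebra
    (n : ℕ) (hn : 1 ≤ n) (R : ℂ) (hR : R ≠ 0)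
    (x : Matrix (Fin n) (Fin n) ℂ) (hx : IsUnit x)
    (hsymm : ∀ a b : Matrix (Fin n) (Fin n) ℂ, (x * a * b).trace = (x * b * a).trace)
    (hspec : R * (x⁻¹).trace = 1) :
    x = (R * (n : ℂ)) • (1 : Matrix (Fin n) (Fin n) ℂ) :=
  symmetric_special_frobenius_form_on_matrix_algebra_general n R x hsymm hspec
end

section
/- Let k be a field of characteristic different from 2, V a finite-dimensional k-vector space, b : V × V → k a nondegenerate bilinear form, and σ : V → V a linear map satisfying b(x,y) = b(σ(y),x) for all x, y ∈ V. Define the subspaces V₊ = {v ∈ V : b(v,w) = b(w,v) for all w ∈ V} and V₋ = {v ∈ V : b(v,w) = −b(w,v) for all w ∈ V}. Then σ∘σ = id if and only if V is the internal direct sum V₊ ⊕ V₋. -/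
/-!
The Nakayama condition says exactly that `b.flip = b ∘ₗ σ`, so `b ∓ b.flip = b ∘ₗ (id ∓ σ)`, and by
nondegeneracy `V₊` and `V₋` are the `±1`-eigenspaces `ker (id - σ)` and `ker (id + σ)` of `σ`.
When `2` is invertible, a linear endomorphism is an involution iff its `±1`-eigenspaces are
complementary: `v = ½ (v + σ v) + ½ (v - σ v)` splits `v` when `σ ∘ₗ σ = id`, and conversely
`σ ∘ₗ σ` fixes both eigenspaces, hence everything when they span.
-/

namespace LinearMap

section Involution

variable {R V : Type*} [AddCommGroup V]

theorem comp_self_eq_id_of_codisjoint_ker_id_sub_ker_id_add [Ring R] [Module R V]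
    {σ : V →ₗ[R] V} (h : Codisjoint (ker (id - σ)) (ker (id + σ))) : σ ∘ₗ σ = id := by
  ext v
  obtain ⟨p, hp, q, hq, rfl⟩ := Submodule.mem_sup.1 (h.eq_top ▸ Submodule.mem_top : v ∈ _ ⊔ _)
  have hσp : σ p = p := (sub_eq_zero.1 hp).symm
  have hσq : σ q = -q := eq_neg_of_add_eq_zero_right hq
  simp [hσp, hσq]

variable [DivisionRing R] [Module R V] (h2 : (2 : R) ≠ 0) (σ : V →ₗ[R] V)
include h2

theorem disjoint_ker_id_sub_ker_id_add : Disjoint (ker (id - σ)) (ker (id + σ)) := by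
  refine Submodule.disjoint_def.2 fun v hp hq => ?_
  have hσv : σ v = v := (sub_eq_zero.1 hp).symm
  have : (2 : R) • v = 0 := by
    rw [two_smul]
    nth_rewrite 2 [← hσv]
    exact hq
  exact (smul_eq_zero.1 this).resolve_left h2

theorem codisjoint_ker_id_sub_ker_id_add_of_comp_self_eq_id (hσ : σ ∘ₗ σ = id) :
    Codisjoint (ker (id - σ)) (ker (id + σ)) := by
  have hσσ (v : V) : σ (σ v) = v := LinearMap.congr_fun hσ v
  refine codisjoint_iff.2 (eq_top_iff.2 fun v _ => ?_)
  have hsplit : v = (2 : R)⁻¹ • (v + σ v) + (2 : R)⁻¹ • (v - σ v) := by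
    rw [← smul_add, add_add_sub_cancel, ← two_smul R v, smul_smul, inv_mul_cancel₀ h2, one_smul]
  rw [hsplit]
  refine Submodule.add_mem_sup (Submodule.smul_mem _ _ ?_) (Submodule.smul_mem _ _ ?_)
  · simp [hσσ, add_comm]
  · simp [hσσ]

theorem comp_self_eq_id_iff_isCompl_ker_id_sub_ker_id_add :
    σ ∘ₗ σ = id ↔ IsCompl (ker (id - σ)) (ker (id + σ)) :=
  ⟨fun hσ => ⟨disjoint_ker_id_sub_ker_id_add h2 σ,
      codisjoint_ker_id_sub_ker_id_add_of_comp_self_eq_id h2 σ hσ⟩,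
    fun h => comp_self_eq_id_of_codisjoint_ker_id_sub_ker_id_add h.codisjoint⟩

end Involution

end LinearMap

open LinearMap

theorem nakayama_squared_id_iff_symmetric_antisymmetric_decomposition_general
    (k : Type*) [Field k] (hchar : (2 : k) ≠ 0)
    (V : Type*) [AddCommGroup V] [Module k V]
    (b : V →ₗ[k] V →ₗ[k] k)
    (hnd : ∀ v : V, (∀ w : V, b v w = 0) → v = 0)
    (σ : V →ₗ[k] V) (hσ : ∀ x y : V, b x y = b (σ y) x) :
    σ ∘ₗ σ = LinearMap.id ↔
      IsCompl (LinearMap.ker (b - b.flip)) (LinearMap.ker (b + b.flip)) := by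
  have hflip : b.flip = b ∘ₗ σ := ext₂ fun x y => hσ y x
  have hb : ker b = ⊥ := ker_eq_bot'.2 fun v hv => hnd v (LinearMap.congr_fun hv)
  rw [show b - b.flip = b ∘ₗ (LinearMap.id - σ) by rw [hflip, comp_sub, comp_id],
    show b + b.flip = b ∘ₗ (LinearMap.id + σ) by rw [hflip, comp_add, comp_id],
    ker_comp_of_ker_eq_bot _ hb, ker_comp_of_ker_eq_bot _ hb]
  exact comp_self_eq_id_iff_isCompl_ker_id_sub_ker_id_add hchar σ

/-- Spherical condition lemma: for a nondegenerate bilinear form `b` on a finite-dimensional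
vector space `V` over a field of characteristic `≠ 2`, with `σ` satisfying
`b(x,y) = b(σ(y),x)`, one has `σ∘σ = id` iff `V` is the internal direct sum of the subspace
`V₊` of vectors `v` with `b(v,·) = b(·,v)` and the subspace `V₋` of vectors `v` with
`b(v,·) = −b(·,v)`, i.e. iff `ker (b - b.flip)` and `ker (b + b.flip)` are complementary. -/
theorem nakayama_squared_id_iff_symmetric_antisymmetric_decomposition
    (k : Type*) [Field k] (hchar : (2 : k) ≠ 0)
    (V : Type*) [AddCommGroup V] [Module k V] [FiniteDimensional k V]
    (b : V →ₗ[k] V →ₗ[k] k)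
    (hnd : ∀ v : V, (∀ w : V, b v w = 0) → v = 0)
    (σ : V →ₗ[k] V) (hσ : ∀ x y : V, b x y = b (σ y) x) :
    σ ∘ₗ σ = LinearMap.id ↔
      IsCompl (LinearMap.ker (b - b.flip)) (LinearMap.ker (b + b.flip)) :=
  nakayama_squared_id_iff_symmetric_antisymmetric_decomposition_general k hchar V b hnd σ hσ
end

section
/- Let A be a finite-dimensional associative unital ℂ-algebra and ε : A → ℂ a linear functional whose associated bilinear form (a,b) ↦ ε(a·b) is nondegenerate. Suppose there are finitely many pairs (y_i, z_i) in A with Σ_i ε(a·y_i)·z_i = a for all a ∈ A and a nonzero R ∈ ℂ with R·Σ_i y_i·z_i = 1. Let σ : A → A be the linear map determined by ε(x·y) = ε(σ(y)·x) for all x, y. Then σ is an inner automorphism: there exists an invertible element u ∈ A such that σ(a) = u⁻¹·a·u for all a ∈ A. -/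
/-!
Put `w = ∑ zᵢ yᵢ`. Expanding `q zᵢ` in the dual basis shows that `x ↦ ε (x w)` is a trace form,
and with the defining identity of `σ` this gives `σ a * w = w * a`. So `w` acts by zero on the
left `A`-module `A ⧸ A w`, whereas `∑ yᵢ zᵢ = R⁻¹` acts invertibly; as `yᵢ zᵢ` and `zᵢ yᵢ` have the
same trace on any finite-dimensional module, the dimension of `A ⧸ A w` vanishes in characteristic
zero. Hence `w` is left invertible, so a unit of the finite-dimensional algebra `A`, and
`σ a = w a w⁻¹`.
-/

open Finset

section
variable {K A ι : Type*} [CommRing K] [Ring A] [Algebra K A] {ε : A →ₗ[K] K} {s : Finset ι}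
  {y z : ι → A}

theorem apply_mul_mul_sum_mul_comm (hB : ∀ a : A, ∑ i ∈ s, ε (a * y i) • z i = a) (p q : A) :
    ε (p * q * ∑ i ∈ s, z i * y i) = ε (q * p * ∑ i ∈ s, z i * y i) := by
  have expand : ∀ p q : A, ε (p * q * ∑ i ∈ s, z i * y i)
      = ∑ i ∈ s, ∑ j ∈ s, ε (q * z i * y j) * ε (p * z j * y i) := fun p q => by
    rw [mul_sum, map_sum]
    refine sum_congr rfl fun i _ => ?_
    conv_lhs => rw [← mul_assoc, mul_assoc p, ← hB (q * z i)]
    simp only [mul_sum, sum_mul, map_sum, mul_smul_comm, smul_mul_assoc, map_smul, smul_eq_mul]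
  rw [expand, expand, sum_comm]
  exact sum_congr rfl fun i _ => sum_congr rfl fun j _ => mul_comm _ _

theorem nakayama_mul_sum_mul (hnd : ∀ b : A, (∀ a : A, ε (a * b) = 0) → b = 0)
    (hB : ∀ a : A, ∑ i ∈ s, ε (a * y i) • z i = a) {σ : A → A}
    (hσ : ∀ x y : A, ε (x * y) = ε (σ y * x)) (a : A) :
    σ a * ∑ i ∈ s, z i * y i = (∑ i ∈ s, z i * y i) * a := by
  rw [← sub_eq_zero]
  refine hnd _ fun x => ?_
  rw [mul_sub, map_sub, sub_eq_zero, ← mul_assoc, ← mul_assoc, apply_mul_mul_sum_mul_comm hB,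
    mul_assoc (σ a), ← hσ, mul_assoc]

end

theorem subsingleton_of_smul_sum_mul_eq_one_of_sum_mul_smul_eq_zero {K A M ι : Type*} [Field K]
    [CharZero K] [Ring A] [Algebra K A] [AddCommGroup M] [Module K M] [Module A M]
    [IsScalarTower K A M] [FiniteDimensional K M] (s : Finset ι) (y z : ι → A) (R : K)
    (hunit : R • ∑ i ∈ s, y i * z i = 1) (hzero : ∀ m : M, (∑ i ∈ s, z i * y i) • m = 0) :
    Subsingleton M := by
  let ρ := Algebra.lsmul K K M (A := A)
  have hρ : ρ (∑ i ∈ s, z i * y i) = 0 := LinearMap.ext hzero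
  have hfin : (Module.finrank K M : K) = 0 := calc
    (Module.finrank K M : K) = LinearMap.trace K M (ρ 1) := by rw [map_one, LinearMap.trace_one]
    _ = R * ∑ i ∈ s, LinearMap.trace K M (ρ (y i) * ρ (z i)) := by
      rw [← hunit]; simp only [map_smul, map_sum, map_mul, smul_eq_mul]
    _ = R * LinearMap.trace K M (ρ (∑ i ∈ s, z i * y i)) := by
      simp only [map_sum, map_mul, LinearMap.trace_mul_comm K (ρ (y _))]
    _ = 0 := by rw [hρ, map_zero, mul_zero]
  exact Module.finrank_zero_iff.mp (by exact_mod_cast hfin)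

theorem isUnit_sum_mul_of_smul_sum_mul_eq_one {K A ι : Type*} [Field K] [CharZero K]
    [Ring A] [Algebra K A] [FiniteDimensional K A] (s : Finset ι) (y z : ι → A) (R : K)
    (hunit : R • ∑ i ∈ s, y i * z i = 1)
    (hw : ∀ a, ∃ b, b * ∑ i ∈ s, z i * y i = (∑ i ∈ s, z i * y i) * a) :
    IsUnit (∑ i ∈ s, z i * y i) := by
  set w := ∑ i ∈ s, z i * y i
  let I : Submodule A A := Submodule.span A {w}
  have : Subsingleton (A ⧸ I) := by
    refine subsingleton_of_smul_sum_mul_eq_one_of_sum_mul_smul_eq_zero (K := K) s y z R hunit ?_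
    intro m
    induction m using Submodule.Quotient.induction_on with | _ a
    obtain ⟨b, hb⟩ := hw a
    rw [← Submodule.Quotient.mk_smul, Submodule.Quotient.mk_eq_zero, smul_eq_mul, ← hb]
    exact Submodule.smul_mem _ b (Submodule.mem_span_singleton_self w)
  obtain ⟨c, hc⟩ := Submodule.mem_span_singleton.mp
    ((Submodule.Quotient.mk_eq_zero I).mp (Subsingleton.elim _ _) : (1 : A) ∈ I)
  have := IsArtinianRing.of_finite K A
  exact IsUnit.of_mul_eq_one_right c hc

theorem nakayama_automorphism_is_inner_general
    (A : Type*) [Ring A] [Algebra ℂ A] [FiniteDimensional ℂ A]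
    (ε : A →ₗ[ℂ] ℂ)
    (hnd₂ : ∀ b : A, (∀ a : A, ε (a * b) = 0) → b = 0)
    (ι : Type*) (s : Finset ι) (y z : ι → A)
    (hB : ∀ a : A, ∑ i ∈ s, ε (a * y i) • z i = a)
    (R : ℂ) (hunit : R • ∑ i ∈ s, y i * z i = 1)
    (σ : A →ₗ[ℂ] A) (hσ : ∀ x y : A, ε (x * y) = ε (σ y * x)) :
    ∃ u : Aˣ, ∀ a : A, σ a = (↑u⁻¹ : A) * a * (↑u : A) := by
  have hcomm := nakayama_mul_sum_mul hnd₂ hB hσ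
  obtain ⟨w, hw⟩ := isUnit_sum_mul_of_smul_sum_mul_eq_one s y z R hunit fun a => ⟨σ a, hcomm a⟩
  refine ⟨w⁻¹, fun a => ?_⟩
  rw [← hw] at hcomm
  rw [inv_inv, ← hcomm a, Units.mul_inv_cancel_right]

/-- The Nakayama automorphism of a special Frobenius algebra over `ℂ` is inner: there is an
invertible `u ∈ A` with `σ(a) = u⁻¹·a·u` for all `a`. -/
theorem nakayama_automorphism_is_inner
    (A : Type*) [Ring A] [Algebra ℂ A] [FiniteDimensional ℂ A]
    (ε : A →ₗ[ℂ] ℂ)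
    (hnd₁ : ∀ a : A, (∀ b : A, ε (a * b) = 0) → a = 0)
    (hnd₂ : ∀ b : A, (∀ a : A, ε (a * b) = 0) → b = 0)
    (ι : Type*) (s : Finset ι) (y z : ι → A)
    (hB : ∀ a : A, ∑ i ∈ s, ε (a * y i) • z i = a)
    (R : ℂ) (hR : R ≠ 0) (hunit : R • ∑ i ∈ s, y i * z i = 1)
    (σ : A →ₗ[ℂ] A) (hσ : ∀ x y : A, ε (x * y) = ε (σ y * x)) :
    ∃ u : Aˣ, ∀ a : A, σ a = (↑u⁻¹ : A) * a * (↑u : A) :=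
  nakayama_automorphism_is_inner_general A ε hnd₂ ι s y z hB R hunit σ hσ
end
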